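/- arXiv:math/0009169 — 8 statements merged into one kernel-verified Lean document; each statement's English description precedes it below -/
import Mathlib

section
/- For every natural number k, the map sending x↦x and y↦y−k·x induces a well-defined ring isomorphism from ℤ[x,y]/(x², y²−x·y) to ℤ[x,y]/(x², y²−(2k+1)·x·y). -/
open MvPolynomial

/-- `x ↦ x`, `y ↦ y − k·x` induces a ring isomorphism
`ℤ[x,y]/(x², y² − x·y) ≃ ℤ[x,y]/(x², y² − (2k+1)·x·y)`. -/
theorem stmt_3 (k : ℕ) :
    ∃ e : (MvPolynomial (Fin 2) ℤ ⧸ Ideal.span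
        ({X 0 ^ 2, X 1 ^ 2 - X 0 * X 1} : Set (MvPolynomial (Fin 2) ℤ))) ≃+*
      (MvPolynomial (Fin 2) ℤ ⧸ Ideal.span
        ({X 0 ^ 2, X 1 ^ 2 - ((2 * k + 1 : ℕ) : MvPolynomial (Fin 2) ℤ) * (X 0 * X 1)} :
          Set (MvPolynomial (Fin 2) ℤ))),
      e (Ideal.Quotient.mk _ (X 0)) = Ideal.Quotient.mk _ (X 0) ∧
      e (Ideal.Quotient.mk _ (X 1)) =
        Ideal.Quotient.mk _ (X 1 - (k : MvPolynomial (Fin 2) ℤ) * X 0) := by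
  set A := MvPolynomial (Fin 2) ℤ with hA
  set I₁ : Ideal A := Ideal.span ({X 0 ^ 2, X 1 ^ 2 - X 0 * X 1} : Set A) with hI₁
  set I₂ : Ideal A := Ideal.span
    ({X 0 ^ 2, X 1 ^ 2 - ((2 * k + 1 : ℕ) : A) * (X 0 * X 1)} : Set A) with hI₂
  set f : A →+* A := (aeval ![X 0, X 1 - (k : A) * X 0] : A →ₐ[ℤ] A).toRingHom with hf
  set g : A →+* A := (aeval ![X 0, X 1 + (k : A) * X 0] : A →ₐ[ℤ] A).toRingHom with hg
  have hf0 : f (X 0) = X 0 := by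
    rw [hf]; rw [AlgHom.toRingHom_eq_coe, AlgHom.coe_toRingHom, aeval_X]; rfl
  have hf1 : f (X 1) = X 1 - (k : A) * X 0 := by
    rw [hf]; rw [AlgHom.toRingHom_eq_coe, AlgHom.coe_toRingHom, aeval_X]; rfl
  have hg0 : g (X 0) = X 0 := by
    rw [hg]; rw [AlgHom.toRingHom_eq_coe, AlgHom.coe_toRingHom, aeval_X]; rfl
  have hg1 : g (X 1) = X 1 + (k : A) * X 0 := by
    rw [hg]; rw [AlgHom.toRingHom_eq_coe, AlgHom.coe_toRingHom, aeval_X]; rfl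
  have hgf1 : g (X 1 - (k : A) * X 0) = X 1 := by
    rw [map_sub, map_mul, map_natCast, hg0, hg1]; ring
  have hfg1 : f (X 1 + (k : A) * X 0) = X 1 := by
    rw [map_add, map_mul, map_natCast, hf0, hf1]; ring
  have hker₁ : I₁ ≤ RingHom.ker ((Ideal.Quotient.mk I₂).comp f) := by
    rw [hI₁, Ideal.span_le]
    rintro q (rfl | rfl)
    · simp only [SetLike.mem_coe, RingHom.mem_ker, RingHom.comp_apply, map_pow, hf0]
      exact Ideal.Quotient.eq_zero_iff_mem.2
        (Ideal.subset_span (Set.mem_insert _ _))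
    · simp only [SetLike.mem_coe, RingHom.mem_ker, RingHom.comp_apply, map_sub, map_mul,
        map_pow, hf0, hf1]
      refine Ideal.Quotient.eq_zero_iff_mem.2 (Ideal.mem_span_pair.2
        ⟨(k : A) * ((k : A) + 1), 1, ?_⟩)
      push_cast
      ring
  have hker₂ : I₂ ≤ RingHom.ker ((Ideal.Quotient.mk I₁).comp g) := by
    rw [hI₂, Ideal.span_le]
    rintro q (rfl | rfl)
    · simp only [SetLike.mem_coe, RingHom.mem_ker, RingHom.comp_apply, map_pow, hg0]
      exact Ideal.Quotient.eq_zero_iff_mem.2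
        (Ideal.subset_span (Set.mem_insert _ _))
    · simp only [SetLike.mem_coe, RingHom.mem_ker, RingHom.comp_apply, map_sub, map_mul,
        map_pow, map_natCast, hg0, hg1]
      refine Ideal.Quotient.eq_zero_iff_mem.2 (Ideal.mem_span_pair.2
        ⟨-((k : A) * ((k : A) + 1)), 1, ?_⟩)
      push_cast
      ring
  set F : A ⧸ I₁ →+* A ⧸ I₂ :=
    Ideal.Quotient.lift I₁ ((Ideal.Quotient.mk I₂).comp f)
      (fun p hp => hker₁ hp) with hF
  set G : A ⧸ I₂ →+* A ⧸ I₁ :=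
    Ideal.Quotient.lift I₂ ((Ideal.Quotient.mk I₁).comp g)
      (fun p hp => hker₂ hp) with hG
  have hFmk : ∀ p : A, F (Ideal.Quotient.mk I₁ p) = Ideal.Quotient.mk I₂ (f p) :=
    fun p => Ideal.Quotient.lift_mk _ _ _
  have hGmk : ∀ p : A, G (Ideal.Quotient.mk I₂ p) = Ideal.Quotient.mk I₁ (g p) :=
    fun p => Ideal.Quotient.lift_mk _ _ _
  have hGF : G.comp F = RingHom.id _ := by
    refine Ideal.Quotient.ringHom_ext (MvPolynomial.ringHom_ext (fun r => ?_) (fun i => ?_))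
    · simp only [RingHom.comp_apply, hFmk, hGmk, RingHom.id_apply]
      rw [show f (C r) = C r from (aeval _).commutes r,
        show g (C r) = C r from (aeval _).commutes r]
    · fin_cases i
      · simp only [RingHom.comp_apply, hFmk, hGmk, RingHom.id_apply, Fin.isValue, Fin.zero_eta]
        rw [hf0, hg0]
      · simp only [RingHom.comp_apply, hFmk, hGmk, RingHom.id_apply, Fin.isValue, Fin.mk_one]
        rw [hf1, hgf1]
  have hFG : F.comp G = RingHom.id _ := by
    refine Ideal.Quotient.ringHom_ext (MvPolynomial.ringHom_ext (fun r => ?_) (fun i => ?_))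
    · simp only [RingHom.comp_apply, hFmk, hGmk, RingHom.id_apply]
      rw [show g (C r) = C r from (aeval _).commutes r,
        show f (C r) = C r from (aeval _).commutes r]
    · fin_cases i
      · simp only [RingHom.comp_apply, hFmk, hGmk, RingHom.id_apply, Fin.isValue, Fin.zero_eta]
        rw [hg0, hf0]
      · simp only [RingHom.comp_apply, hFmk, hGmk, RingHom.id_apply, Fin.isValue, Fin.mk_one]
        rw [hg1, hfg1]
  refine ⟨RingEquiv.ofRingHom F G hFG hGF, ?_, ?_⟩
  · rw [RingEquiv.ofRingHom_apply, hFmk, hf0]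
  · rw [RingEquiv.ofRingHom_apply, hFmk, hf1]
end

section
/- In the commutative ring Q₁ = ℤ[x,y,q₁,q₂,s]/(q₂·s−1, x²−q₁·s, (y−x)²−q₂), the identity x²·y² = q₁ + 2·q₁·s·(x·y) − q₁²·s² holds. -/
open MvPolynomial

/-- In `Q₁ = ℤ[x,y,q₁,q₂,s]/(q₂s−1, x²−q₁s, (y−x)²−q₂)` — the quantum cohomology
ring of `F₂` — one has `x²·y² = q₁ + 2·q₁·s·(x·y) − q₁²·s²`.
Variables: `X 0 = x, X 1 = y, X 2 = q₁, X 3 = q₂, X 4 = s`. -/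
theorem stmt_7 :
    Ideal.Quotient.mk (Ideal.span
      ({X 3 * X 4 - 1, X 0 ^ 2 - X 2 * X 4, (X 1 - X 0) ^ 2 - X 3} :
        Set (MvPolynomial (Fin 5) ℤ)))
      (X 0 ^ 2 * X 1 ^ 2) =
    Ideal.Quotient.mk _
      (X 2 + 2 * X 2 * X 4 * (X 0 * X 1) - X 2 ^ 2 * X 4 ^ 2) := by
  rw [Ideal.Quotient.eq]
  have h : (X 0 ^ 2 * X 1 ^ 2 : MvPolynomial (Fin 5) ℤ) -
      (X 2 + 2 * X 2 * X 4 * (X 0 * X 1) - X 2 ^ 2 * X 4 ^ 2) =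
      (X 1 ^ 2 - X 2 * X 4) * (X 0 ^ 2 - X 2 * X 4) +
      (X 2 * X 4) * ((X 1 - X 0) ^ 2 - X 3) +
      X 2 * (X 3 * X 4 - 1) := by ring
  rw [h]
  refine Ideal.add_mem _ (Ideal.add_mem _ ?_ ?_) ?_ <;>
    apply Ideal.mul_mem_left <;> apply Ideal.subset_span <;> simp
end

section
/- In the commutative ring Q_k = ℤ[x,y,q₁,q₂,s]/(q₂·s−1, x²−q₁·sᵏ, (y−k·x)²−q₂), the identity x²·y^{2k} = Σ_{j=0}^{k} C(2k,2j)·k^{2j}·q₁^{j+1}·s^{j(k+1)} + Σ_{j=0}^{k−1} C(2k,2j+1)·k^{2j+1}·q₁^{j+1}·s^{j(k+1)+1}·(x·y − k·q₁·sᵏ) holds, where C(n,i) is the binomial coefficient. -/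
open MvPolynomial Finset

private lemma sum_split {M : Type*} [AddCommMonoid M] (f : ℕ → M) (n : ℕ) :
    ∑ i ∈ Finset.range (2 * n + 1), f i =
      (∑ j ∈ Finset.range (n + 1), f (2 * j)) +
        ∑ j ∈ Finset.range n, f (2 * j + 1) := by
  induction n with
  | zero => simp
  | succ n ih =>
    have h1 : 2 * (n + 1) + 1 = (2 * n + 1) + 1 + 1 := by ring
    rw [h1, Finset.sum_range_succ, Finset.sum_range_succ, ih,
      Finset.sum_range_succ (fun j => f (2 * j)) (n + 1),
      Finset.sum_range_succ (fun j => f (2 * j + 1)) n]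
    have h2 : 2 * n + 1 + 1 = 2 * (n + 1) := by ring
    rw [h2]
    abel

set_option maxHeartbeats 1000000 in
/-- In `Q_k = ℤ[x,y,q₁,q₂,s]/(q₂s−1, x²−q₁sᵏ, (y−kx)²−q₂)` with `k ≥ 1`,
`x²·y^{2k} = Σ_{j=0}^{k} C(2k,2j)·k^{2j}·q₁^{j+1}·s^{j(k+1)}
 + Σ_{j=0}^{k−1} C(2k,2j+1)·k^{2j+1}·q₁^{j+1}·s^{j(k+1)+1}·(xy − k·q₁·sᵏ)`.
Variables: `X 0 = x, X 1 = y, X 2 = q₁, X 3 = q₂, X 4 = s`. -/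
theorem stmt_10 (k : ℕ) (hk : 1 ≤ k) :
    Ideal.Quotient.mk (Ideal.span
      ({X 3 * X 4 - 1,
        X 0 ^ 2 - X 2 * X 4 ^ k,
        (X 1 - (k : MvPolynomial (Fin 5) ℤ) * X 0) ^ 2 - X 3} :
        Set (MvPolynomial (Fin 5) ℤ)))
      (X 0 ^ 2 * X 1 ^ (2 * k)) =
    Ideal.Quotient.mk _
      ((∑ j ∈ Finset.range (k + 1),
          ((Nat.choose (2 * k) (2 * j) : MvPolynomial (Fin 5) ℤ) *
            ((k : MvPolynomial (Fin 5) ℤ)) ^ (2 * j) *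
            X 2 ^ (j + 1) * X 4 ^ (j * (k + 1)))) +
       (∑ j ∈ Finset.range k,
          ((Nat.choose (2 * k) (2 * j + 1) : MvPolynomial (Fin 5) ℤ) *
            ((k : MvPolynomial (Fin 5) ℤ)) ^ (2 * j + 1) *
            X 2 ^ (j + 1) * X 4 ^ (j * (k + 1) + 1) *
            (X 0 * X 1 - (k : MvPolynomial (Fin 5) ℤ) * X 2 * X 4 ^ k)))) := by
  set I := Ideal.span
      ({X 3 * X 4 - 1,
        X 0 ^ 2 - X 2 * X 4 ^ k,
        (X 1 - (k : MvPolynomial (Fin 5) ℤ) * X 0) ^ 2 - X 3} :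
        Set (MvPolynomial (Fin 5) ℤ)) with hI
  set φ := Ideal.Quotient.mk I with hφ
  set a := φ (X 0) with ha_def
  set b := φ (X 1) with hb_def
  set q := φ (X 2) with hq_def
  set Qv := φ (X 3) with hQ_def
  set t := φ (X 4) with ht_def
  have mem1 : (X 3 * X 4 - 1 : MvPolynomial (Fin 5) ℤ) ∈ I :=
    Ideal.subset_span (by simp)
  have mem2 : (X 0 ^ 2 - X 2 * X 4 ^ k : MvPolynomial (Fin 5) ℤ) ∈ I :=
    Ideal.subset_span (by simp)
  have mem3 : ((X 1 - (k : MvPolynomial (Fin 5) ℤ) * X 0) ^ 2 - X 3 :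
      MvPolynomial (Fin 5) ℤ) ∈ I := Ideal.subset_span (by simp)
  have hqt : Qv * t = 1 := by
    have := Ideal.Quotient.eq_zero_iff_mem.2 mem1
    rw [map_sub, map_mul, map_one, sub_eq_zero] at this
    exact this
  have ha : a ^ 2 = q * t ^ k := by
    have := Ideal.Quotient.eq_zero_iff_mem.2 mem2
    rw [map_sub, map_mul, map_pow, map_pow, sub_eq_zero] at this
    exact this
  have hz2 : (b - (k : MvPolynomial (Fin 5) ℤ ⧸ I) * a) ^ 2 = Qv := by
    have := Ideal.Quotient.eq_zero_iff_mem.2 mem3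
    rw [map_sub, map_pow, map_sub, map_mul, map_natCast, sub_eq_zero] at this
    exact this
  set z := b - (k : MvPolynomial (Fin 5) ℤ ⧸ I) * a with hz_def
  show φ (X 0 ^ 2 * X 1 ^ (2 * k)) = _
  simp only [map_add, map_sum, map_mul, map_pow, map_sub, map_natCast]
  show a ^ 2 * b ^ (2 * k) =
      (∑ j ∈ Finset.range (k + 1),
        ((Nat.choose (2 * k) (2 * j) : MvPolynomial (Fin 5) ℤ ⧸ I) *
          (k : MvPolynomial (Fin 5) ℤ ⧸ I) ^ (2 * j) *
          q ^ (j + 1) * t ^ (j * (k + 1)))) +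
      ∑ j ∈ Finset.range k,
        ((Nat.choose (2 * k) (2 * j + 1) : MvPolynomial (Fin 5) ℤ ⧸ I) *
          (k : MvPolynomial (Fin 5) ℤ ⧸ I) ^ (2 * j + 1) *
          q ^ (j + 1) * t ^ (j * (k + 1) + 1) *
          (a * b - (k : MvPolynomial (Fin 5) ℤ ⧸ I) * q * t ^ k))
  have hb : b = (k : MvPolynomial (Fin 5) ℤ ⧸ I) * a + z := by
    rw [hz_def]; ring
  rw [hb, add_pow, Finset.mul_sum,
    sum_split (fun i => a ^ 2 *
      (((k : MvPolynomial (Fin 5) ℤ ⧸ I) * a) ^ i * z ^ (2 * k - i) *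
        (Nat.choose (2 * k) i : MvPolynomial (Fin 5) ℤ ⧸ I))) k]
  congr 1
  · apply Finset.sum_congr rfl
    intro j hj
    have hjk : j ≤ k := by simpa using Nat.lt_succ_iff.mp (Finset.mem_range.mp hj)
    have e1 : z ^ (2 * k - 2 * j) = (z ^ 2) ^ (k - j) := by
      rw [← pow_mul]; congr 1; omega
    have key : t ^ (k * (j + 1)) * Qv ^ (k - j) = t ^ (j * (k + 1)) := by
      have h : k * (j + 1) = j * (k + 1) + (k - j) := by
        obtain ⟨d, hd⟩ := Nat.exists_eq_add_of_le hjk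
        subst hd
        have hdd : j + d - j = d := by omega
        rw [hdd]; ring
      rw [h, pow_add, mul_assoc, ← mul_pow, mul_comm t Qv, hqt, one_pow, mul_one]
    calc a ^ 2 * (((k : MvPolynomial (Fin 5) ℤ ⧸ I) * a) ^ (2 * j) *
          z ^ (2 * k - 2 * j) * (Nat.choose (2 * k) (2 * j) : MvPolynomial (Fin 5) ℤ ⧸ I))
        = (Nat.choose (2 * k) (2 * j) : MvPolynomial (Fin 5) ℤ ⧸ I) *
          (k : MvPolynomial (Fin 5) ℤ ⧸ I) ^ (2 * j) *
          ((a ^ 2) ^ (j + 1) * (z ^ 2) ^ (k - j)) := by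
          rw [e1]; ring
      _ = (Nat.choose (2 * k) (2 * j) : MvPolynomial (Fin 5) ℤ ⧸ I) *
          (k : MvPolynomial (Fin 5) ℤ ⧸ I) ^ (2 * j) *
          (q ^ (j + 1) * (t ^ (k * (j + 1)) * Qv ^ (k - j))) := by
          rw [ha, hz2, mul_pow, ← pow_mul]; ring
      _ = _ := by rw [key]; ring
  · apply Finset.sum_congr rfl
    intro j hj
    have hjk : j < k := Finset.mem_range.mp hj
    have e1 : z ^ (2 * k - (2 * j + 1)) = (z ^ 2) ^ (k - 1 - j) * z := by
      rw [← pow_mul, ← pow_succ]; congr 1; omega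
    have key : t ^ (k * (j + 1)) * Qv ^ (k - 1 - j) = t ^ (j * (k + 1) + 1) := by
      have h : k * (j + 1) = (j * (k + 1) + 1) + (k - 1 - j) := by
        obtain ⟨d, hd⟩ := Nat.exists_eq_add_of_lt hjk
        subst hd
        have hdd : j + d + 1 - 1 - j = d := by omega
        rw [hdd]; ring
      rw [h, pow_add, mul_assoc, ← mul_pow, mul_comm t Qv, hqt, one_pow, mul_one]
    have haz : a * z = a * b - (k : MvPolynomial (Fin 5) ℤ ⧸ I) * q * t ^ k := by
      rw [hz_def]
      linear_combination -(k : MvPolynomial (Fin 5) ℤ ⧸ I) * ha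
    calc a ^ 2 * (((k : MvPolynomial (Fin 5) ℤ ⧸ I) * a) ^ (2 * j + 1) *
          z ^ (2 * k - (2 * j + 1)) *
          (Nat.choose (2 * k) (2 * j + 1) : MvPolynomial (Fin 5) ℤ ⧸ I))
        = (Nat.choose (2 * k) (2 * j + 1) : MvPolynomial (Fin 5) ℤ ⧸ I) *
          (k : MvPolynomial (Fin 5) ℤ ⧸ I) ^ (2 * j + 1) *
          ((a ^ 2) ^ (j + 1) * (z ^ 2) ^ (k - 1 - j) * (a * z)) := by
          rw [e1]; ring
      _ = (Nat.choose (2 * k) (2 * j + 1) : MvPolynomial (Fin 5) ℤ ⧸ I) *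
          (k : MvPolynomial (Fin 5) ℤ ⧸ I) ^ (2 * j + 1) *
          (q ^ (j + 1) * (t ^ (k * (j + 1)) * Qv ^ (k - 1 - j)) * (a * z)) := by
          rw [ha, hz2, mul_pow, ← pow_mul]; ring
      _ = _ := by rw [key, haz]; ring
end

section
/- For every natural number k ≥ 1, in the ring ℤ[x,y]/(x²·y^{2k}, y²−2k·x·y) the image of x² is nonzero. -/
open MvPolynomial

/-- For `k ≥ 1`, in `ℤ[x,y]/(x²·y^{2k}, y² − 2k·x·y)` — the specialization of
Batyrev's quantum ring of `F_{2k}` at `q₁ = q₂ = 0` — the image of `x²` is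
nonzero. -/
theorem stmt_11 (k : ℕ) (hk : 1 ≤ k) :
    Ideal.Quotient.mk (Ideal.span
      ({X 0 ^ 2 * X 1 ^ (2 * k),
        X 1 ^ 2 - ((2 * k : ℕ) : MvPolynomial (Fin 2) ℤ) * (X 0 * X 1)} :
        Set (MvPolynomial (Fin 2) ℤ)))
      (X 0 ^ 2) ≠ 0 := by
  intro h
  have hmem : (X 0 ^ 2 : MvPolynomial (Fin 2) ℤ) ∈ Ideal.span
      ({X 0 ^ 2 * X 1 ^ (2 * k),
        X 1 ^ 2 - ((2 * k : ℕ) : MvPolynomial (Fin 2) ℤ) * (X 0 * X 1)} :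
        Set (MvPolynomial (Fin 2) ℤ)) := Ideal.Quotient.eq_zero_iff_mem.mp h
  set I : Ideal (Polynomial ℤ) := Ideal.span {Polynomial.X ^ 3} with hI
  let q : Polynomial ℤ →+* Polynomial ℤ ⧸ I := Ideal.Quotient.mk I
  let ψ : MvPolynomial (Fin 2) ℤ →ₐ[ℤ] Polynomial ℤ :=
    aeval ![Polynomial.X, ((2 * k : ℕ) : Polynomial ℤ) * Polynomial.X]
  let φ : MvPolynomial (Fin 2) ℤ →+* Polynomial ℤ ⧸ I := q.comp ψ.toRingHom
  have hψ0 : ψ (X 0) = Polynomial.X := by simp [ψ]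
  have hψ1 : ψ (X 1) = ((2 * k : ℕ) : Polynomial ℤ) * Polynomial.X := by simp [ψ]
  have hφ : ∀ p, φ p = q (ψ p) := fun p => rfl
  have hker : Ideal.span
      ({X 0 ^ 2 * X 1 ^ (2 * k),
        X 1 ^ 2 - ((2 * k : ℕ) : MvPolynomial (Fin 2) ℤ) * (X 0 * X 1)} :
        Set (MvPolynomial (Fin 2) ℤ)) ≤ RingHom.ker φ := by
    rw [Ideal.span_le]
    rintro p (rfl | rfl) <;>
      simp only [SetLike.mem_coe, RingHom.mem_ker, hφ]
    · have hψp : ψ (X 0 ^ 2 * X 1 ^ (2 * k)) =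
          Polynomial.X ^ 2 * (((2 * k : ℕ) : Polynomial ℤ) * Polynomial.X) ^ (2 * k) := by
        rw [map_mul, map_pow, map_pow, hψ0, hψ1]
      rw [hψp, Ideal.Quotient.eq_zero_iff_mem, hI, Ideal.mem_span_singleton]
      have h3 : Polynomial.X ^ 3 ∣ (Polynomial.X : Polynomial ℤ) ^ (2 + 2 * k) :=
        pow_dvd_pow _ (by omega)
      refine dvd_trans h3 ?_
      have heq : Polynomial.X ^ 2 * (((2 * k : ℕ) : Polynomial ℤ) * Polynomial.X) ^ (2 * k) =
          ((2 * k : ℕ) : Polynomial ℤ) ^ (2 * k) * Polynomial.X ^ (2 + 2 * k) := by ring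
      rw [heq]
      exact dvd_mul_left _ _
    · have hψp : ψ (X 1 ^ 2 - ((2 * k : ℕ) : MvPolynomial (Fin 2) ℤ) * (X 0 * X 1)) = 0 := by
        rw [map_sub, map_pow, map_mul, map_mul, map_natCast, hψ0, hψ1]
        ring
      rw [hψp, map_zero]
  have hzero : φ (X 0 ^ 2) = 0 := hker hmem
  rw [hφ, map_pow, hψ0, Ideal.Quotient.eq_zero_iff_mem, hI,
    Ideal.mem_span_singleton] at hzero
  have := Polynomial.natDegree_le_of_dvd hzero (pow_ne_zero _ Polynomial.X_ne_zero)
  simp [Polynomial.natDegree_X_pow] at this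
end

section
/- For every natural number k ≥ 1, the ring ℤ[x,y]/(x²·y^{2k}, y²−2k·x·y) is not finitely generated as a ℤ-module; in particular it is not isomorphic to ℤ[x,y]/(x², y²−2k·x·y), which is a free ℤ-module of rank 4. -/
/-!
Sending `x ↦ X`, `y ↦ 0` kills both `x²y^{2k}` (as `k ≥ 1`) and `y² − 2kxy`, so the first ring
surjects onto `ℤ[X]`, which is not a finitely generated ℤ-module.

The second ring is the Leray–Hirsch presentation of the cohomology of a `ℙ¹`-bundle over `ℙ¹`:
it is `A[y]/(y² − 2k·x·y)` over `A = ℤ[x]/(x²)`, a tower of two extensions by monic quadratics,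
hence free of rank `2 · 2 = 4`. A ring isomorphism is additive, so it would carry this finiteness
over to the first ring.
-/

open MvPolynomial

theorem MvPolynomial.not_finite_quotient_of_le_span_X {R σ : Type*} [CommRing R] [Nontrivial R]
    {i j : σ} (hji : j ≠ i) {I : Ideal (MvPolynomial σ R)} (hI : I ≤ Ideal.span {X i}) :
    ¬ Module.Finite R (MvPolynomial σ R ⧸ I) := by
  classical
  let φ : MvPolynomial σ R →ₐ[R] Polynomial R :=
    aeval (Function.update (fun _ => Polynomial.X) i 0)
  have hIφ : I ≤ RingHom.ker φ := hI.trans <| Ideal.span_le.2 <| by simp [φ]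
  have hsection : φ.comp (Polynomial.aeval (X j)) = AlgHom.id R _ := by
    ext
    simp [φ, hji]
  intro hfin
  refine Polynomial.not_finite (Module.Finite.of_surjective
    (Ideal.Quotient.liftₐ I φ hIφ).toLinearMap fun p =>
      ⟨Ideal.Quotient.mk I (Polynomial.aeval (X j) p), ?_⟩)
  exact AlgHom.congr_fun hsection p

namespace Hirzebruch

noncomputable section

variable {R : Type*} [CommRing R]

theorem not_finite_quotient_X_zero_sq_mul_X_one_pow [Nontrivial R] (c : R) {m : ℕ} (hm : m ≠ 0) :
    ¬ Module.Finite R (MvPolynomial (Fin 2) R ⧸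
      (Ideal.span {X 0 ^ 2 * X 1 ^ m, X 1 ^ 2 - C c * (X 0 * X 1)} :
        Ideal (MvPolynomial (Fin 2) R))) := by
  refine MvPolynomial.not_finite_quotient_of_le_span_X (i := (1 : Fin 2)) (j := 0)
    (by decide) ?_
  rw [Ideal.span_le, Set.insert_subset_iff, Set.singleton_subset_iff]
  simp only [SetLike.mem_coe, Ideal.mem_span_singleton]
  exact ⟨(dvd_pow_self _ hm).mul_left _,
    dvd_sub (dvd_pow_self _ two_ne_zero) ((dvd_mul_left _ _).mul_left _)⟩

abbrev cohomologyIdeal (c : R) : Ideal (MvPolynomial (Fin 2) R) :=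
  Ideal.span {X 0 ^ 2, X 1 ^ 2 - C c * (X 0 * X 1)}

abbrev Cohomology (c : R) : Type _ := MvPolynomial (Fin 2) R ⧸ cohomologyIdeal c

variable (R) in
abbrev BaseCohomology : Type _ := AdjoinRoot (Polynomial.X ^ 2 : Polynomial R)

def fiberPoly (c : R) : Polynomial (BaseCohomology R) :=
  Polynomial.X ^ 2 - Polynomial.C (c • AdjoinRoot.root _) * Polynomial.X

abbrev BundleCohomology (c : R) : Type _ := AdjoinRoot (fiberPoly c)

instance [Nontrivial R] : Nontrivial (BaseCohomology R) :=
  (AdjoinRoot.lift (RingHom.id R) 0 (by simp)).domain_nontrivial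

theorem fiberPoly_monic (c : R) : (fiberPoly c).Monic := by
  unfold fiberPoly; monicity!

theorem natDegree_fiberPoly [Nontrivial R] (c : R) : (fiberPoly c).natDegree = 2 := by
  unfold fiberPoly; compute_degree!

@[simp]
theorem eval₂_fiberPoly {S : Type*} [CommRing S] (f : BaseCohomology R →+* S) (c : R) (y : S) :
    (fiberPoly c).eval₂ f y = y ^ 2 - f (c • AdjoinRoot.root _) * y := by
  simp [fiberPoly]

theorem root_sq : AdjoinRoot.root (Polynomial.X ^ 2 : Polynomial R) ^ 2 = 0 := by
  have h := AdjoinRoot.eval₂_root (Polynomial.X ^ 2 : Polynomial R)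
  rwa [Polynomial.eval₂_X_pow] at h

theorem root_fiberPoly_sq (c : R) :
    AdjoinRoot.root (fiberPoly c) ^ 2 =
      c • (AdjoinRoot.of _ (AdjoinRoot.root _) * AdjoinRoot.root (fiberPoly c)) := by
  have h := AdjoinRoot.eval₂_root (fiberPoly c)
  rw [eval₂_fiberPoly, sub_eq_zero] at h
  rw [h, ← smul_mul_assoc]
  exact congrArg (· * _) (map_smul (AdjoinRoot.ofAlgHom R (fiberPoly c)) c _)

theorem mk_X_zero_sq (c : R) : Ideal.Quotient.mk (cohomologyIdeal c) (X 0) ^ 2 = 0 := by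
  rw [← map_pow, Ideal.Quotient.eq_zero_iff_mem]
  exact Ideal.subset_span (by simp)

theorem mk_X_one_sq (c : R) :
    Ideal.Quotient.mk (cohomologyIdeal c) (X 1) ^ 2 =
      c • (Ideal.Quotient.mk (cohomologyIdeal c) (X 0) *
        Ideal.Quotient.mk (cohomologyIdeal c) (X 1)) := by
  have h : Ideal.Quotient.mk (cohomologyIdeal c) (X 1 ^ 2 - C c * (X 0 * X 1)) = 0 :=
    Ideal.Quotient.eq_zero_iff_mem.2 (Ideal.subset_span (by simp))
  rw [map_sub, map_mul, map_pow, map_mul, ← MvPolynomial.algebraMap_eq,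
    Ideal.Quotient.mk_algebraMap, ← Algebra.smul_def] at h
  exact sub_eq_zero.1 h

def bundleGenerators (c : R) : Fin 2 → BundleCohomology c :=
  ![AdjoinRoot.of _ (AdjoinRoot.root _), AdjoinRoot.root _]

theorem cohomologyIdeal_le_ker (c : R) :
    cohomologyIdeal c ≤ RingHom.ker (aeval (bundleGenerators c)) := by
  rw [cohomologyIdeal, Ideal.span_le, Set.insert_subset_iff, Set.singleton_subset_iff]
  simp only [SetLike.mem_coe, RingHom.mem_ker, map_pow, map_sub, map_mul, aeval_X, aeval_C,
    bundleGenerators, Matrix.cons_val_zero, Matrix.cons_val_one]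
  refine ⟨by rw [← map_pow, root_sq, map_zero], ?_⟩
  rw [root_fiberPoly_sq, Algebra.smul_def, sub_self]

def toBundle (c : R) : Cohomology c →ₐ[R] BundleCohomology c :=
  Ideal.Quotient.liftₐ _ (aeval (bundleGenerators c)) fun _ h => cohomologyIdeal_le_ker c h

@[simp]
theorem toBundle_mk (c : R) (p : MvPolynomial (Fin 2) R) :
    toBundle c (Ideal.Quotient.mk _ p) = aeval (bundleGenerators c) p :=
  rfl

def ofBundle (c : R) : BundleCohomology c →ₐ[R] Cohomology c :=
  AdjoinRoot.liftAlgHom (fiberPoly c)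
    (AdjoinRoot.liftAlgHom _ (Algebra.ofId R _) (Ideal.Quotient.mk _ (X 0))
      (by simpa using mk_X_zero_sq c))
    (Ideal.Quotient.mk _ (X 1))
    (by simp only [eval₂_fiberPoly, AlgHom.coe_toRingHom, map_smul, AdjoinRoot.liftAlgHom_root,
      mk_X_one_sq, smul_mul_assoc, sub_self])

def cohomologyEquivBundle (c : R) : Cohomology c ≃ₐ[R] BundleCohomology c :=
  AlgEquiv.ofAlgHom (toBundle c) (ofBundle c)
    (by
      ext
      · simp [ofBundle, bundleGenerators]
      · simp [ofBundle, bundleGenerators])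
    (by
      apply Ideal.Quotient.algHom_ext
      apply MvPolynomial.algHom_ext
      intro i
      fin_cases i <;> simp [ofBundle, bundleGenerators])

def bundleBasis [Nontrivial R] (c : R) : Module.Basis (Fin 2 × Fin 2) R (BundleCohomology c) :=
  ((AdjoinRoot.powerBasis' (Polynomial.monic_X_pow 2)).basis.reindex
      (finCongr (Polynomial.natDegree_X_pow 2))).smulTower
    ((AdjoinRoot.powerBasis' (fiberPoly_monic c)).basis.reindex
      (finCongr (natDegree_fiberPoly c)))

def cohomologyBasis [Nontrivial R] (c : R) : Module.Basis (Fin 4) R (Cohomology c) :=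
  ((bundleBasis c).reindex finProdFinEquiv).map (cohomologyEquivBundle c).symm.toLinearEquiv

end

end Hirzebruch

/-- For `k ≥ 1`, the ring `ℤ[x,y]/(x²·y^{2k}, y² − 2k·x·y)` is not finitely
generated as a ℤ-module; in particular it is not isomorphic to
`ℤ[x,y]/(x², y² − 2k·x·y)`, which is a free ℤ-module of rank 4. -/
theorem stmt_12 (k : ℕ) (hk : 1 ≤ k) :
    ¬ Module.Finite ℤ
      (MvPolynomial (Fin 2) ℤ ⧸ Ideal.span
        ({X 0 ^ 2 * X 1 ^ (2 * k),
          X 1 ^ 2 - ((2 * k : ℕ) : MvPolynomial (Fin 2) ℤ) * (X 0 * X 1)} :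
          Set (MvPolynomial (Fin 2) ℤ))) ∧
    Nonempty (Module.Basis (Fin 4) ℤ
      (MvPolynomial (Fin 2) ℤ ⧸ Ideal.span
        ({X 0 ^ 2,
          X 1 ^ 2 - ((2 * k : ℕ) : MvPolynomial (Fin 2) ℤ) * (X 0 * X 1)} :
          Set (MvPolynomial (Fin 2) ℤ)))) ∧
    IsEmpty
      ((MvPolynomial (Fin 2) ℤ ⧸ Ideal.span
        ({X 0 ^ 2 * X 1 ^ (2 * k),
          X 1 ^ 2 - ((2 * k : ℕ) : MvPolynomial (Fin 2) ℤ) * (X 0 * X 1)} :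
          Set (MvPolynomial (Fin 2) ℤ))) ≃+*
       (MvPolynomial (Fin 2) ℤ ⧸ Ideal.span
        ({X 0 ^ 2,
          X 1 ^ 2 - ((2 * k : ℕ) : MvPolynomial (Fin 2) ℤ) * (X 0 * X 1)} :
          Set (MvPolynomial (Fin 2) ℤ)))) := by
  have hcast : ((2 * k : ℕ) : MvPolynomial (Fin 2) ℤ) = C ((2 * k : ℕ) : ℤ) :=
    (map_natCast C _).symm
  rw [hcast]
  have hinfinite := Hirzebruch.not_finite_quotient_X_zero_sq_mul_X_one_pow ((2 * k : ℕ) : ℤ)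
    (by omega : 2 * k ≠ 0)
  have basis := Hirzebruch.cohomologyBasis ((2 * k : ℕ) : ℤ)
  have : Module.Finite ℤ (Hirzebruch.Cohomology ((2 * k : ℕ) : ℤ)) := .of_basis basis
  exact ⟨hinfinite, ⟨basis⟩, ⟨fun e => hinfinite (.equiv e.toAddEquiv.toIntLinearEquiv.symm)⟩⟩
end

section
/- The ℚ-algebras ℚ[x,y]/(x²·y²−1, y²−2·x·y−1) and ℚ[x,y]/(x²−1, (y−x)²−1) are not isomorphic. -/
open MvPolynomial

/-- The second ring admits an algebra hom to ℚ, evaluating at (1,2). -/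
noncomputable def evalHom :
    (MvPolynomial (Fin 2) ℚ ⧸ Ideal.span
      ({X 0 ^ 2 - 1, (X 1 - X 0) ^ 2 - 1} :
        Set (MvPolynomial (Fin 2) ℚ))) →ₐ[ℚ] ℚ :=
  Ideal.Quotient.liftₐ _ (aeval (fun i : Fin 2 => if i = 0 then (1 : ℚ) else 2)) (by
    have hle : Ideal.span ({X 0 ^ 2 - 1, (X 1 - X 0) ^ 2 - 1} :
        Set (MvPolynomial (Fin 2) ℚ)) ≤
        RingHom.ker (aeval (fun i : Fin 2 => if i = 0 then (1 : ℚ) else 2)).toRingHom := by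
      rw [Ideal.span_le]
      rintro q (rfl | rfl) <;> simp [RingHom.mem_ker] <;> norm_num
    intro a ha
    exact hle ha)

theorem no_rat_sqrt3 (b : ℚ) : b ^ 2 ≠ 3 := by
  intro h
  have h3 : Irrational (Real.sqrt 3) := by
    simpa using (Nat.prime_three).irrational_sqrt
  have hb : ((b : ℝ)) ^ 2 = 3 := by exact_mod_cast h
  have : Real.sqrt 3 = ((|b| : ℚ) : ℝ) := by
    rw [← hb, Real.sqrt_sq_eq_abs]; push_cast; ring
  exact h3 ⟨|b|, this.symm⟩

/-- Batyrev's quantum ring of `F₂` at `q₁ = q₂ = 1` and the actual quantum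
cohomology ring of `F₂` at `q₁ = q₂ = 1` are not isomorphic as ℚ-algebras. -/
theorem stmt_15 :
    IsEmpty
      ((MvPolynomial (Fin 2) ℚ ⧸ Ideal.span
        ({X 0 ^ 2 * X 1 ^ 2 - 1, X 1 ^ 2 - 2 * (X 0 * X 1) - 1} :
          Set (MvPolynomial (Fin 2) ℚ))) ≃ₐ[ℚ]
       (MvPolynomial (Fin 2) ℚ ⧸ Ideal.span
        ({X 0 ^ 2 - 1, (X 1 - X 0) ^ 2 - 1} :
          Set (MvPolynomial (Fin 2) ℚ)))) := by
  constructor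
  intro e
  set I := Ideal.span
    ({X 0 ^ 2 * X 1 ^ 2 - 1, X 1 ^ 2 - 2 * (X 0 * X 1) - 1} :
      Set (MvPolynomial (Fin 2) ℚ))
  let g : (MvPolynomial (Fin 2) ℚ ⧸ I) →ₐ[ℚ] ℚ := evalHom.comp e.toAlgHom
  set a : ℚ := g (Ideal.Quotient.mk I (X 0)) with ha
  set b : ℚ := g (Ideal.Quotient.mk I (X 1)) with hb
  have h1 : a ^ 2 * b ^ 2 - 1 = 0 := by
    have : Ideal.Quotient.mk I (X 0 ^ 2 * X 1 ^ 2 - 1) = 0 :=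
      Ideal.Quotient.eq_zero_iff_mem.mpr (Ideal.subset_span (by simp))
    have := congrArg g this
    simpa [ha, hb] using this
  have h2 : b ^ 2 - 2 * (a * b) - 1 = 0 := by
    have h0 : Ideal.Quotient.mk I (X 1 ^ 2 - 2 * (X 0 * X 1) - 1) = 0 :=
      Ideal.Quotient.eq_zero_iff_mem.mpr (Ideal.subset_span (by simp))
    have h0' := congrArg g h0
    have h2' : g (Ideal.Quotient.mk I 2) = 2 := by
      rw [map_ofNat (Ideal.Quotient.mk I) 2, map_ofNat]
    simpa [ha, hb, h2'] using h0'
  have hab : a * b = 1 ∨ a * b = -1 := by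
    have : (a * b - 1) * (a * b + 1) = 0 := by nlinarith
    rcases mul_eq_zero.mp this with h | h
    · left; linarith
    · right; linarith
  rcases hab with h | h
  · exact no_rat_sqrt3 b (by nlinarith)
  · nlinarith
end

section
/- The ℚ-vector space ℚ[x,y]/(x²·y²−1, y²−2·x·y−1) has dimension 4 over ℚ. -/
/-!
Modulo `y² - 2xy - 1` we have `2xy = y² - 1`, so `4(x²y² - 1) ≡ y⁴ - 2y² - 3`. Modulo that quartic `y`
is a unit, and solving `2xy = y² - 1` for `x` gives `x ≡ (5y - y³)/6`. Hence the ideal is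
`(x - (5y - y³)/6, y⁴ - 2y² - 3)`, and eliminating `x` identifies the quotient with
`ℚ[y]/(y⁴ - 2y² - 3)`, of dimension 4.
-/

open MvPolynomial
open scoped Polynomial

namespace MvPolynomial

variable {R : Type*} [CommRing R] (p q : R[X])

/-- The ideal `(x - q(y), p(y))` of `R[x, y]`, with `x = X 0` and `y = X 1`. -/
noncomputable abbrev graphIdeal : Ideal (MvPolynomial (Fin 2) R) :=
  Ideal.span {X 0 - Polynomial.aeval (X 1) q, Polynomial.aeval (X 1) p}

noncomputable def toAdjoinRoot : MvPolynomial (Fin 2) R →ₐ[R] AdjoinRoot p :=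
  aeval ![Polynomial.aeval (AdjoinRoot.root p) q, AdjoinRoot.root p]

@[simp] lemma toAdjoinRoot_X_zero :
    toAdjoinRoot p q (X 0) = Polynomial.aeval (AdjoinRoot.root p) q := by
  simp [toAdjoinRoot]

@[simp] lemma toAdjoinRoot_X_one : toAdjoinRoot p q (X 1) = AdjoinRoot.root p := by
  simp [toAdjoinRoot]

@[simp] lemma toAdjoinRoot_aeval_X_one (f : R[X]) :
    toAdjoinRoot p q (Polynomial.aeval (X 1) f) = Polynomial.aeval (AdjoinRoot.root p) f := by
  rw [← Polynomial.aeval_algHom_apply, toAdjoinRoot_X_one]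

lemma graphIdeal_le_ker_toAdjoinRoot : graphIdeal p q ≤ RingHom.ker (toAdjoinRoot p q) := by
  rw [Ideal.span_le]
  rintro f (rfl | rfl) <;> simp

lemma aeval_mk_X_one (f : R[X]) :
    Polynomial.aeval (Ideal.Quotient.mk (graphIdeal p q) (X 1)) f =
      Ideal.Quotient.mk (graphIdeal p q) (Polynomial.aeval (X 1) f) := by
  rw [← Ideal.Quotient.mkₐ_eq_mk R, Polynomial.aeval_algHom_apply]

lemma aeval_mk_X_one_self :
    Polynomial.aeval (Ideal.Quotient.mk (graphIdeal p q) (X 1)) p = 0 := by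
  rw [aeval_mk_X_one, Ideal.Quotient.eq_zero_iff_mem]
  exact Ideal.subset_span (by simp)

lemma mk_X_zero :
    Ideal.Quotient.mk (graphIdeal p q) (X 0) =
      Polynomial.aeval (Ideal.Quotient.mk (graphIdeal p q) (X 1)) q := by
  rw [aeval_mk_X_one, Ideal.Quotient.eq]
  exact Ideal.subset_span (by simp)

noncomputable def quotientGraphIdealToAdjoinRoot :
    (MvPolynomial (Fin 2) R ⧸ graphIdeal p q) →ₐ[R] AdjoinRoot p :=
  Ideal.Quotient.liftₐ _ (toAdjoinRoot p q) fun _ h => graphIdeal_le_ker_toAdjoinRoot p q h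

@[simp] lemma quotientGraphIdealToAdjoinRoot_mk (f : MvPolynomial (Fin 2) R) :
    quotientGraphIdealToAdjoinRoot p q (Ideal.Quotient.mk _ f) = toAdjoinRoot p q f :=
  rfl

noncomputable def adjoinRootToQuotientGraphIdeal :
    AdjoinRoot p →ₐ[R] MvPolynomial (Fin 2) R ⧸ graphIdeal p q :=
  AdjoinRoot.liftAlgHom p (Algebra.ofId R _) _ (aeval_mk_X_one_self p q)

@[simp] lemma adjoinRootToQuotientGraphIdeal_root :
    adjoinRootToQuotientGraphIdeal p q (AdjoinRoot.root p) = Ideal.Quotient.mk _ (X 1) :=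
  AdjoinRoot.liftAlgHom_root ..

noncomputable def quotientGraphIdealEquiv :
    (MvPolynomial (Fin 2) R ⧸ graphIdeal p q) ≃ₐ[R] AdjoinRoot p :=
  AlgEquiv.ofAlgHom (quotientGraphIdealToAdjoinRoot p q) (adjoinRootToQuotientGraphIdeal p q)
    (AdjoinRoot.algHom_ext (by simp))
    (Ideal.Quotient.algHom_ext _ <| MvPolynomial.algHom_ext <| Fin.forall_fin_two.2
      ⟨show adjoinRootToQuotientGraphIdeal p q
            (quotientGraphIdealToAdjoinRoot p q (Ideal.Quotient.mk _ (X 0))) =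
          Ideal.Quotient.mk _ (X 0) by
        rw [quotientGraphIdealToAdjoinRoot_mk, toAdjoinRoot_X_zero, ← Polynomial.aeval_algHom_apply,
          adjoinRootToQuotientGraphIdeal_root, mk_X_zero],
        by simp⟩)

end MvPolynomial

lemma span_eq_graphIdeal :
    (Ideal.span {X 0 ^ 2 * X 1 ^ 2 - 1, X 1 ^ 2 - 2 * (X 0 * X 1) - 1} :
      Ideal (MvPolynomial (Fin 2) ℚ)) =
    graphIdeal (Polynomial.X ^ 4 - 2 * Polynomial.X ^ 2 - 3)
      (Polynomial.C 6⁻¹ * (5 * Polynomial.X - Polynomial.X ^ 3)) := by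
  have h6 : (C 6⁻¹ : MvPolynomial (Fin 2) ℚ) * 6 = 1 := by
    rw [← map_ofNat C 6, ← C_mul, inv_mul_cancel₀ (by norm_num), C_1]
  set u : MvPolynomial (Fin 2) ℚ := C 6⁻¹
  set x : MvPolynomial (Fin 2) ℚ := X 0
  set y : MvPolynomial (Fin 2) ℚ := X 1
  apply le_antisymm <;> rw [Ideal.span_le] <;> rintro f (rfl | rfl) <;>
    simp only [SetLike.mem_coe, Ideal.mem_span_pair, map_sub, map_mul, map_pow, map_ofNat,
      Polynomial.aeval_X, Polynomial.aeval_C, MvPolynomial.algebraMap_eq]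
  · exact ⟨(x + u * (5 * y - y ^ 3)) * y ^ 2, u ^ 2 * (y ^ 4 - 8 * y ^ 2 + 12),
      by linear_combination -(6 * u + 1) * h6⟩
  · exact ⟨-2 * y, 2 * u, by linear_combination (y ^ 2 - 1) * h6⟩
  · exact ⟨u * (4 * y - 8 * x), u * (y + 2 * x - 4 * x ^ 2 * y), by linear_combination x * h6⟩
  · exact ⟨4, y ^ 2 + 2 * x * y - 1, by ring⟩

/-- Batyrev's quantum ring of `F₂` at `q₁ = q₂ = 1`,
`ℚ[x,y]/(x²y² − 1, y² − 2xy − 1)`, is 4-dimensional over ℚ. -/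
theorem stmt_16 :
    Module.finrank ℚ
      (MvPolynomial (Fin 2) ℚ ⧸ Ideal.span
        ({X 0 ^ 2 * X 1 ^ 2 - 1, X 1 ^ 2 - 2 * (X 0 * X 1) - 1} :
          Set (MvPolynomial (Fin 2) ℚ))) = 4 := by
  rw [span_eq_graphIdeal, (quotientGraphIdealEquiv _ _).toLinearEquiv.finrank_eq]
  refine finrank_quotient_span_eq_natDegree.trans ?_
  compute_degree!
end

section
/- The ring Q_k = ℤ[x,y,q₁,q₂,s]/(q₂·s−1, x²−q₁·sᵏ, (y−k·x)²−q₂) is a free module of rank 4 over the subring ℤ[q₁,q₂,s]/(q₂·s−1), with basis the images of 1, x, y−k·x, and x·(y−k·x). -/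
open MvPolynomial

/-- The coefficient ring `ℤ[q₁,q₂,s]/(q₂s−1)`, with `X 0 = q₁, X 1 = q₂, X 2 = s`. -/
abbrev NovikovRing : Type :=
  MvPolynomial (Fin 3) ℤ ⧸ Ideal.span
    ({X 1 * X 2 - 1} : Set (MvPolynomial (Fin 3) ℤ))

/-- The quantum cohomology ring `Q_k = ℤ[x,y,q₁,q₂,s]/(q₂s−1, x²−q₁sᵏ, (y−kx)²−q₂)`
of the Hirzebruch surface `F_{2k}`, with `X 0 = x, X 1 = y, X 2 = q₁, X 3 = q₂, X 4 = s`. -/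
abbrev QuantumRing (k : ℕ) : Type :=
  MvPolynomial (Fin 5) ℤ ⧸ Ideal.span
    ({X 3 * X 4 - 1,
      X 0 ^ 2 - X 2 * X 4 ^ k,
      (X 1 - (k : MvPolynomial (Fin 5) ℤ) * X 0) ^ 2 - X 3} :
      Set (MvPolynomial (Fin 5) ℤ))

/-!
Write `R = ℤ[q₁,q₂,q₂⁻¹]` and `u = y − kx`. In terms of `x` and `u` the relations of `Q_k` read
`x² = q₁sᵏ` and `u² = q₂`, so `Q_k` is the tower of two quadratic extensions
`R[x]/(x² − q₁sᵏ)` and then `[u]/(u² − q₂)`. Each step is free with basis `1, root` since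
`X² − c` is monic, so the tower is free over `R` with basis `xⁱuʲ` for `i, j < 2`.
-/

noncomputable section

namespace AdjoinRoot

variable {R : Type*} [CommRing R] {n : ℕ} (a : R)

theorem root_X_pow_sub_C_pow :
    root (Polynomial.X ^ n - Polynomial.C a) ^ n = of _ a := by
  rw [← sub_eq_zero, ← mk_X, ← mk_C, ← map_pow, ← map_sub, mk_self]

variable [Nontrivial R]

theorem nontrivial_X_pow_sub_C (hn : n ≠ 0) :
    Nontrivial (AdjoinRoot (Polynomial.X ^ n - Polynomial.C a)) := by
  refine Ideal.Quotient.nontrivial_iff.mpr ?_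
  rw [Ne, Ideal.span_singleton_eq_top, (Polynomial.monic_X_pow_sub_C a hn).isUnit_iff]
  intro h
  simpa [hn] using congrArg Polynomial.natDegree h

def basisXPowSubC (hn : n ≠ 0) :
    Module.Basis (Fin n) R (AdjoinRoot (Polynomial.X ^ n - Polynomial.C a)) :=
  (powerBasis' (Polynomial.monic_X_pow_sub_C a hn)).basis.reindex
    (finCongr Polynomial.natDegree_X_pow_sub_C)

theorem basisXPowSubC_apply (hn : n ≠ 0) (i : Fin n) :
    basisXPowSubC a hn i = root _ ^ (i : ℕ) := by
  rw [basisXPowSubC, Module.Basis.reindex_apply, PowerBasis.basis_eq_pow, powerBasis'_gen]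
  rfl

end AdjoinRoot

namespace NovikovRing

def q₁ : NovikovRing := Ideal.Quotient.mk _ (X 0)
def q₂ : NovikovRing := Ideal.Quotient.mk _ (X 1)
def s : NovikovRing := Ideal.Quotient.mk _ (X 2)

theorem q₂_mul_s : q₂ * s = 1 := by
  rw [q₂, s, ← map_mul, ← map_one (Ideal.Quotient.mk _), Ideal.Quotient.mk_eq_mk_iff_sub_mem]
  exact Ideal.subset_span rfl

instance : Nontrivial NovikovRing :=
  (Ideal.Quotient.lift _ (eval fun _ => (1 : ℤ)) fun a ha => by
    obtain ⟨c, rfl⟩ := Ideal.mem_span_singleton'.mp ha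
    simp).domain_nontrivial

end NovikovRing

namespace QuantumRing

open NovikovRing

variable (k : ℕ)

instance : Algebra NovikovRing (QuantumRing k) :=
  (Ideal.quotientMap _ (rename ![2, 3, 4]).toRingHom <| Ideal.span_le.mpr <| by
    rintro _ rfl
    exact Ideal.subset_span (by simp)).toAlgebra

theorem algebraMap_mk (i : Fin 3) :
    algebraMap NovikovRing (QuantumRing k) (Ideal.Quotient.mk _ (X i)) =
      Ideal.Quotient.mk _ (X (![2, 3, 4] i)) := by
  simp [RingHom.algebraMap_toAlgebra, Ideal.quotientMap_mk]

def x : QuantumRing k := Ideal.Quotient.mk _ (X 0)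
def u : QuantumRing k := Ideal.Quotient.mk _ (X 1 - (k : MvPolynomial (Fin 5) ℤ) * X 0)

theorem x_sq : x k ^ 2 = algebraMap NovikovRing (QuantumRing k) (q₁ * s ^ k) := by
  rw [map_mul, map_pow, q₁, s, algebraMap_mk, algebraMap_mk, x, ← map_pow, ← map_pow, ← map_mul,
    Ideal.Quotient.mk_eq_mk_iff_sub_mem]
  exact Ideal.subset_span (by simp)

theorem u_sq : u k ^ 2 = algebraMap NovikovRing (QuantumRing k) q₂ := by
  rw [q₂, algebraMap_mk, u, ← map_pow, Ideal.Quotient.mk_eq_mk_iff_sub_mem]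
  exact Ideal.subset_span (by simp)

theorem natCast_mul_x_add_u : (k : QuantumRing k) * x k + u k = Ideal.Quotient.mk _ (X 1) := by
  rw [x, u, ← map_natCast (Ideal.Quotient.mk _), ← map_mul, ← map_add, add_sub_cancel]

abbrev TowerBase : Type := AdjoinRoot (Polynomial.X ^ 2 - Polynomial.C (q₁ * s ^ k))

abbrev Tower : Type :=
  AdjoinRoot (Polynomial.X ^ 2 - Polynomial.C (algebraMap NovikovRing (TowerBase k) q₂))

instance : Nontrivial (TowerBase k) := AdjoinRoot.nontrivial_X_pow_sub_C _ two_ne_zero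

def Tower.x : Tower k := algebraMap (TowerBase k) (Tower k) (AdjoinRoot.root _)
def Tower.u : Tower k := AdjoinRoot.root _

theorem Tower.x_sq : Tower.x k ^ 2 = algebraMap NovikovRing (Tower k) (q₁ * s ^ k) := by
  rw [Tower.x, ← map_pow, AdjoinRoot.root_X_pow_sub_C_pow, ← AdjoinRoot.algebraMap_eq,
    ← IsScalarTower.algebraMap_apply]

theorem Tower.u_sq : Tower.u k ^ 2 = algebraMap NovikovRing (Tower k) q₂ := by
  rw [Tower.u, AdjoinRoot.root_X_pow_sub_C_pow, ← AdjoinRoot.algebraMap_eq,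
    ← IsScalarTower.algebraMap_apply]

def Tower.basis : Module.Basis (Fin 2 × Fin 2) NovikovRing (Tower k) :=
  (AdjoinRoot.basisXPowSubC _ two_ne_zero).smulTower (AdjoinRoot.basisXPowSubC _ two_ne_zero)

theorem Tower.basis_apply (i j : Fin 2) :
    Tower.basis k (i, j) = Tower.x k ^ (i : ℕ) * Tower.u k ^ (j : ℕ) := by
  rw [Tower.basis, Module.Basis.smulTower_apply]
  simp only [AdjoinRoot.basisXPowSubC_apply, Algebra.smul_def, map_pow]
  rfl

def ofTower : Tower k →ₐ[NovikovRing] QuantumRing k :=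
  AdjoinRoot.liftAlgHom _
    (AdjoinRoot.liftAlgHom _ (Algebra.ofId _ _) (x k) (by simp [x_sq]))
    (u k) (by simp [u_sq])

theorem ofTower_x : ofTower k (Tower.x k) = x k :=
  (AdjoinRoot.liftAlgHom_of _ _ _ _ _).trans (AdjoinRoot.liftAlgHom_root _ _ _ _)

theorem ofTower_u : ofTower k (Tower.u k) = u k :=
  AdjoinRoot.liftAlgHom_root _ _ _ _

def toTower : QuantumRing k →+* Tower k :=
  Ideal.Quotient.lift _
    (eval₂Hom (Int.castRingHom _) ![Tower.x k, k * Tower.x k + Tower.u k, algebraMap _ _ q₁,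
      algebraMap _ _ q₂, algebraMap _ _ s]) fun a ha => by
    refine RingHom.mem_ker.mp <| (Ideal.span_le (I := RingHom.ker _)).mpr ?_ ha
    rintro _ (rfl | rfl | rfl) <;> rw [SetLike.mem_coe, RingHom.mem_ker]
    · simp [← map_mul, q₂_mul_s]
    · simp [Tower.x_sq]
    · simp [Tower.u_sq]

theorem toTower_mk_X (i : Fin 5) : toTower k (Ideal.Quotient.mk _ (X i)) =
    ![Tower.x k, k * Tower.x k + Tower.u k, algebraMap _ _ q₁, algebraMap _ _ q₂,
      algebraMap _ _ s] i := by
  rw [toTower, Ideal.Quotient.lift_mk]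
  exact eval₂Hom_X' _ _ _

theorem toTower_x : toTower k (x k) = Tower.x k := by
  rw [x, toTower_mk_X]
  rfl

theorem toTower_u : toTower k (u k) = Tower.u k := by
  rw [u, toTower, Ideal.Quotient.lift_mk]
  simp

theorem toTower_comp_algebraMap :
    (toTower k).comp (algebraMap NovikovRing (QuantumRing k)) = algebraMap _ _ := by
  refine Ideal.Quotient.ringHom_ext (MvPolynomial.ringHom_ext' (RingHom.ext_int _ _) fun i => ?_)
  simp only [RingHom.comp_apply, algebraMap_mk, toTower_mk_X]
  fin_cases i <;> rfl

theorem ofTower_comp_toTower :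
    (ofTower k : Tower k →+* QuantumRing k).comp (toTower k) = RingHom.id _ := by
  refine Ideal.Quotient.ringHom_ext (MvPolynomial.ringHom_ext' (RingHom.ext_int _ _) fun i => ?_)
  simp only [RingHom.comp_apply, RingHom.coe_coe, toTower_mk_X]
  fin_cases i
  · exact ofTower_x k
  · show ofTower k (k * Tower.x k + Tower.u k) = Ideal.Quotient.mk _ (X 1)
    rw [map_add, map_mul, map_natCast, ofTower_x, ofTower_u, natCast_mul_x_add_u]
  all_goals simp [q₁, q₂, s, algebraMap_mk]

theorem toTower_comp_ofTower :
    (toTower k).comp (ofTower k : Tower k →+* QuantumRing k) = RingHom.id _ := by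
  refine AdjoinRoot.ringHom_ext (AdjoinRoot.ringHom_ext (RingHom.ext fun r => ?_) ?_) ?_
  · show toTower k (ofTower k (algebraMap NovikovRing (Tower k) r)) = algebraMap _ _ r
    rw [AlgHom.commutes, ← RingHom.comp_apply, toTower_comp_algebraMap]
  · show toTower k (ofTower k (Tower.x k)) = Tower.x k
    rw [ofTower_x, toTower_x]
  · show toTower k (ofTower k (Tower.u k)) = Tower.u k
    rw [ofTower_u, toTower_u]

def towerEquiv : Tower k ≃ₐ[NovikovRing] QuantumRing k :=
  AlgEquiv.ofRingEquiv (f := RingEquiv.ofRingHom (ofTower k) (toTower k)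
    (ofTower_comp_toTower k) (toTower_comp_ofTower k)) (ofTower k).commutes

theorem towerEquiv_apply (t : Tower k) : towerEquiv k t = ofTower k t := rfl

def basisProd : Module.Basis (Fin 2 × Fin 2) NovikovRing (QuantumRing k) :=
  (Tower.basis k).map (towerEquiv k).toLinearEquiv

theorem basisProd_apply (i j : Fin 2) :
    basisProd k (i, j) = x k ^ (i : ℕ) * u k ^ (j : ℕ) := by
  rw [basisProd, Module.Basis.map_apply, AlgEquiv.toLinearEquiv_apply, towerEquiv_apply,
    Tower.basis_apply, map_mul, map_pow, map_pow, ofTower_x, ofTower_u]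

def basis : Module.Basis (Fin 4) NovikovRing (QuantumRing k) :=
  (basisProd k).reindex ((Equiv.prodComm _ _).trans finProdFinEquiv)

theorem basis_finProdFinEquiv (i j : Fin 2) :
    basis k (finProdFinEquiv (j, i)) = x k ^ (i : ℕ) * u k ^ (j : ℕ) := by
  rw [basis, Module.Basis.reindex_apply, Equiv.symm_trans_apply, Equiv.symm_apply_apply,
    Equiv.prodComm_symm, Equiv.prodComm_apply, Prod.swap_prod_mk, basisProd_apply]

end QuantumRing

end

/-- `Q_k` is a free module of rank 4 over `ℤ[q₁,q₂,s]/(q₂s−1)` (acting via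
`q₁ ↦ q₁, q₂ ↦ q₂, s ↦ s`), with basis the images of `1, x, y−kx, x·(y−kx)`. -/
theorem stmt_18 (k : ℕ) :
    ∃ f : NovikovRing →+* QuantumRing k,
      f (Ideal.Quotient.mk _ (X 0)) = Ideal.Quotient.mk _ (X 2) ∧
      f (Ideal.Quotient.mk _ (X 1)) = Ideal.Quotient.mk _ (X 3) ∧
      f (Ideal.Quotient.mk _ (X 2)) = Ideal.Quotient.mk _ (X 4) ∧
      ∃ b : @Module.Basis (Fin 4) NovikovRing (QuantumRing k) _ _ (Module.compHom _ f),
        b 0 = Ideal.Quotient.mk _ 1 ∧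
        b 1 = Ideal.Quotient.mk _ (X 0) ∧
        b 2 = Ideal.Quotient.mk _ (X 1 - (k : MvPolynomial (Fin 5) ℤ) * X 0) ∧
        b 3 = Ideal.Quotient.mk _
            (X 0 * (X 1 - (k : MvPolynomial (Fin 5) ℤ) * X 0)) := by
  open QuantumRing in
  refine ⟨algebraMap _ _, algebraMap_mk k 0, algebraMap_mk k 1, algebraMap_mk k 2, basis k,
    (basis_finProdFinEquiv k 0 0).trans ?_, (basis_finProdFinEquiv k 1 0).trans ?_,
    (basis_finProdFinEquiv k 0 1).trans ?_, (basis_finProdFinEquiv k 1 1).trans ?_⟩ <;>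
  simp [x, u]
end
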